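/- Let 𝒯 be a Krull–Schmidt, Hom-finite triangulated category over an algebraically closed field k, R a basic presilting object of 𝒯, and X ∈ pr(R). Then the following are equivalent: (a) X is R[1]-rigid; (b) X is rigid, i.e., Hom_𝒯(X, X[1]) = 0; (c) X is presilting, i.e., Hom_𝒯(X, X[i]) = 0 for all i > 0. -/

import Mathlib

/-!
Formalization of results from "Relative rigid objects in triangulated categories"
by Fu–Geng–Liu.  Throughout, `C` is a Krull–Schmidt, Hom-finite, `k`-linear
triangulated category over an algebraically closed field `k` (Krull–Schmidt is
encoded as: Hom-finite over `k` together with idempotent completeness), with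
suspension functor `⟦1⟧`.
-/

open CategoryTheory Limits Pretriangulated Opposite

universe w v u

namespace RelRigid

variable {k : Type w} [Field k] [IsAlgClosed k]
variable {C : Type u} [Category.{v} C] [Preadditive C] [CategoryTheory.Linear k C]
  [HasZeroObject C] [HasShift C ℤ] [∀ n : ℤ, (shiftFunctor C n).Additive]
  [Pretriangulated C] [HasFiniteBiproducts C] [IsIdempotentComplete C]
  [∀ X Y : C, Module.Finite k (X ⟶ Y)]

/-- `X` belongs to `add R`: it is a direct summand of a finite direct sum of copies of `R`. -/
def InAdd (R X : C) : Prop :=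
  ∃ (n : ℕ) (s : X ⟶ ⨁ (fun _ : Fin n => R)) (p : (⨁ (fun _ : Fin n => R)) ⟶ X),
    s ≫ p = 𝟙 X

/-- `Y` is a direct summand of `X`. -/
def IsSummand (Y X : C) : Prop := ∃ (s : Y ⟶ X) (p : X ⟶ Y), s ≫ p = 𝟙 Y

/-- The morphism `f` factors through `add Z`. -/
def FactorsThroughAdd (Z : C) {X Y : C} (f : X ⟶ Y) : Prop :=
  ∃ (Z' : C) (_ : InAdd Z Z') (g : X ⟶ Z') (h : Z' ⟶ Y), g ≫ h = f

/-- `X` is rigid: `Hom(X, X[1]) = 0`. -/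
def IsRigidObj (X : C) : Prop := ∀ f : X ⟶ X⟦(1 : ℤ)⟧, f = 0

/-- `X` is `R[1]`-rigid: `R[1](X, X[1]) = 0`, i.e. every morphism `X ⟶ X[1]`
factoring through `add (R[1])` vanishes. -/
def IsRelRigid (R X : C) : Prop :=
  ∀ f : X ⟶ X⟦(1 : ℤ)⟧, FactorsThroughAdd (R⟦(1 : ℤ)⟧) f → f = 0

/-- `X ∈ pr(R)`: there is a triangle `R₁ ⟶ R₀ ⟶ X ⟶ R₁[1]` with `R₀, R₁ ∈ add R`. -/
def InPr (R X : C) : Prop :=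
  ∃ (R₁ R₀ : C) (_ : InAdd R R₁) (_ : InAdd R R₀) (f : R₁ ⟶ R₀) (g : R₀ ⟶ X)
    (h : X ⟶ R₁⟦(1 : ℤ)⟧), Triangle.mk f g h ∈ distTriang C

/-- `X` is maximal `R[1]`-rigid with respect to `pr(R)`: `X ∈ pr(R)` is `R[1]`-rigid and
any `Z ∈ pr(R)` with `R[1](X ⊕ Z, (X ⊕ Z)[1]) = 0` satisfies `Z ∈ add X`. -/
def IsMaxRelRigid (R X : C) : Prop :=
  InPr R X ∧ IsRelRigid R X ∧ ∀ Z : C, InPr R Z → IsRelRigid R (X ⊞ Z) → InAdd X Z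

/-- `X` is indecomposable. -/
def Indecomp (X : C) : Prop :=
  ¬ IsZero X ∧ ∀ A B : C, Nonempty (X ≅ A ⊞ B) → IsZero A ∨ IsZero B

/-- `f` is a decomposition of `X` into indecomposable objects. -/
def IsDecomp (X : C) {n : ℕ} (f : Fin n → C) : Prop :=
  (∀ i, Indecomp (f i)) ∧ Nonempty (X ≅ ⨁ f)

/-- `|X| = n`: `X` has exactly `n` pairwise non-isomorphic indecomposable direct summands. -/
def NumIndec (X : C) (n : ℕ) : Prop :=
  ∃ g : Fin n → C, (∀ i, Indecomp (g i)) ∧ (∀ i j : Fin n, Nonempty (g i ≅ g j) → i = j) ∧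
    ∀ Y : C, Indecomp Y → (IsSummand Y X ↔ ∃ i : Fin n, Nonempty (Y ≅ g i))

/-- `X` is basic: it decomposes into pairwise non-isomorphic indecomposable objects. -/
def IsBasic (X : C) : Prop :=
  ∃ (n : ℕ) (f : Fin n → C), IsDecomp X f ∧ ∀ i j : Fin n, Nonempty (f i ≅ f j) → i = j

/-- `Hom(R, Y)` is a left module over `End (op R)` (equivalently, a right module over the
endomorphism algebra `Γ = End R`), via precomposition. -/
instance homModule (R Y : C) : Module (End (op R)) (R ⟶ Y) where
  smul g f := g.unop ≫ f
  one_smul f := by show (1 : End (op R)).unop ≫ f = f; simp [End.one_def]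
  mul_smul g h f := by
    show (g * h).unop ≫ f = g.unop ≫ h.unop ≫ f
    simp [End.mul_def]
  smul_zero g := by show g.unop ≫ (0 : _ ⟶ _) = 0; simp
  smul_add g f₁ f₂ := by
    show g.unop ≫ (f₁ + f₂) = g.unop ≫ f₁ + g.unop ≫ f₂
    simp
  add_smul g h f := by
    show (g + h).unop ≫ f = g.unop ≫ f + h.unop ≫ f
    rw [show (g + h).unop = g.unop + h.unop from rfl, Preadditive.add_comp]
  zero_smul f := by show (0 : End (op R)).unop ≫ f = 0; simp

/-- Postcomposition `Hom(R, X) → Hom(R, Y)` with `φ : X ⟶ Y`, i.e. the action of the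
functor `Hom(R, −)` on morphisms; it is linear over `End (op R)`. -/
def homMap (R : C) {X Y : C} (φ : X ⟶ Y) : (R ⟶ X) →ₗ[End (op R)] (R ⟶ Y) where
  toFun u := u ≫ φ
  map_add' u v := by simp [Preadditive.add_comp]
  map_smul' g u := by
    show (g.unop ≫ u) ≫ φ = g.unop ≫ (u ≫ φ)
    simp [Category.assoc]

/-- `T` is a cluster tilting object:
`add T = {X : Hom(T, X[1]) = 0} = {X : Hom(X, T[1]) = 0}`. -/
def IsClusterTilting (T : C) : Prop :=
  (∀ X : C, InAdd T X ↔ ∀ f : T ⟶ X⟦(1 : ℤ)⟧, f = 0) ∧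
  (∀ X : C, InAdd T X ↔ ∀ f : X ⟶ T⟦(1 : ℤ)⟧, f = 0)

/-- `T` is maximal `R[1]`-rigid with respect to the whole category `C`. -/
def IsMaxRelRigidAll (R T : C) : Prop :=
  IsRelRigid R T ∧ ∀ Z : C, IsRelRigid R (T ⊞ Z) → InAdd T Z

/-- `T` is `R[1]`-cluster tilting: `T` is `R[1]`-rigid and `|T| = |R|`. -/
def IsRelClusterTilting (R T : C) : Prop :=
  IsRelRigid R T ∧ ∃ n : ℕ, NumIndec T n ∧ NumIndec R n

/-- `S` is presilting: `Hom(S, S[i]) = 0` for all `i > 0`. -/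
def IsPresilting (S : C) : Prop := ∀ i : ℤ, 0 < i → ∀ f : S ⟶ S⟦i⟧, f = 0

/-- A predicate on objects defines a thick subcategory: closed under isomorphisms,
shifts, extensions (cones) and direct summands. -/
def IsThickClosed (P : C → Prop) : Prop :=
  (∀ X Y : C, (X ≅ Y) → P X → P Y) ∧
  (∀ (X : C) (n : ℤ), P X → P (X⟦n⟧)) ∧
  (∀ T : Triangle C, T ∈ (distTriang C) → P T.obj₁ → P T.obj₂ → P T.obj₃) ∧
  (∀ X Y : C, IsSummand Y X → P X → P Y)

/-- The smallest thick subcategory of `C` containing `S` is `C` itself. -/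
def ThickGenerates (S : C) : Prop :=
  ∀ P : C → Prop, IsThickClosed P → P S → ∀ X : C, P X

/-- `S` is silting: presilting and `thick S = C`. -/
def IsSilting (S : C) : Prop := IsPresilting S ∧ ThickGenerates S

/-- `C` is `n`-Calabi–Yau: there are bifunctorial isomorphisms
`Hom(X, Y) ≅ D Hom(Y, X[n])`, encoded by a perfect pairing
`Hom(X, Y) × Hom(Y, X[n]) → k` which is natural in both variables. -/
def IsCalabiYau (n : ℤ) : Prop :=
  ∃ pair : ∀ X Y : C, (X ⟶ Y) →ₗ[k] ((Y ⟶ X⟦n⟧) →ₗ[k] k),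
    (∀ X Y : C, Function.Bijective (pair X Y)) ∧
    (∀ (X' X Y : C) (u : X' ⟶ X) (f : X ⟶ Y) (g : Y ⟶ X'⟦n⟧),
      pair X' Y (u ≫ f) g = pair X Y f (g ≫ (shiftFunctor C n).map u)) ∧
    (∀ (X Y Y' : C) (v : Y ⟶ Y') (f : X ⟶ Y) (g : Y' ⟶ X⟦n⟧),
      pair X Y' (f ≫ v) g = pair X Y f (v ≫ g))

/-- `T` is `d`-rigid: `Hom(T, T[i]) = 0` for `i = 1, …, d`. -/
def IsDRigid (d : ℤ) (T : C) : Prop := ∀ i : ℤ, 1 ≤ i → i ≤ d → ∀ f : T ⟶ T⟦i⟧, f = 0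

/-- `T` is maximal `d`-rigid. -/
def IsMaxDRigid (d : ℤ) (T : C) : Prop :=
  IsDRigid d T ∧ ∀ Z : C, IsDRigid d (T ⊞ Z) → InAdd T Z

/-- `T` is a `d`-cluster tilting object. -/
def IsDClusterTilting (d : ℤ) (T : C) : Prop :=
  IsDRigid d T ∧
  ∀ X : C, (∀ i : ℤ, 1 ≤ i → i ≤ d → ∀ f : T ⟶ X⟦i⟧, f = 0) → InAdd T X

/-- `X` is a maximal rigid object. -/
def IsMaxRigidObj (X : C) : Prop :=
  IsRigidObj X ∧ ∀ Z : C, IsRigidObj (X ⊞ Z) → InAdd X Z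

/-- The isomorphism setoid on objects of `C` satisfying a predicate `p`. -/
def objSetoid (p : C → Prop) : Setoid {X : C // p X} where
  r X Y := Nonempty (X.1 ≅ Y.1)
  iseqv := ⟨fun _ => ⟨Iso.refl _⟩, fun ⟨e⟩ => ⟨e.symm⟩, fun ⟨e⟩ ⟨f⟩ => ⟨e.trans f⟩⟩

section Modules

variable (Γ : Type w) [Ring Γ]

/-- `f, g` is a minimal projective presentation `P₁ → P₀ → M → 0`:
both `P`s are projective, the sequence is exact with `g` surjective, and the kernels of
`g` and `f` are superfluous submodules (which encodes minimality). -/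
def IsMinProjPres {P₁ P₀ M : Type w} [AddCommGroup P₁] [Module Γ P₁]
    [AddCommGroup P₀] [Module Γ P₀] [AddCommGroup M] [Module Γ M]
    (f : P₁ →ₗ[Γ] P₀) (g : P₀ →ₗ[Γ] M) : Prop :=
  Module.Projective Γ P₁ ∧ Module.Projective Γ P₀ ∧
  Function.Surjective g ∧ Function.Exact f g ∧
  (∀ K : Submodule Γ P₀, LinearMap.ker g ⊔ K = ⊤ → K = ⊤) ∧
  (∀ K : Submodule Γ P₁, LinearMap.ker f ⊔ K = ⊤ → K = ⊤)

/-- `M` is `τ`-rigid, via the Adachi–Iyama–Reiten criterion: for a minimal projective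
presentation `P₁ →f P₀ → M → 0`, the map `Hom(f, M) : Hom(P₀, M) → Hom(P₁, M)` is
surjective. -/
def IsTauRigid (M : Type w) [AddCommGroup M] [Module Γ M] : Prop :=
  ∀ (P₁ P₀ : Type w) [AddCommGroup P₁] [Module Γ P₁] [AddCommGroup P₀] [Module Γ P₀],
    ∀ (f : P₁ →ₗ[Γ] P₀) (g : P₀ →ₗ[Γ] M), IsMinProjPres Γ f g →
    Function.Surjective (fun h : P₀ →ₗ[Γ] M => h ∘ₗ f)

/-- `(M, P)` is a `τ`-rigid pair: `M ∈ mod Γ` is `τ`-rigid, `P` is finitely generated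
projective and `Hom(P, M) = 0`. -/
def IsTauRigidPair (M P : Type w) [AddCommGroup M] [Module Γ M]
    [AddCommGroup P] [Module Γ P] : Prop :=
  Module.Finite Γ M ∧ IsTauRigid Γ M ∧
  Module.Finite Γ P ∧ Module.Projective Γ P ∧ ∀ h : P →ₗ[Γ] M, h = 0

/-- A module is indecomposable. -/
def ModIndec (M : Type w) [AddCommGroup M] [Module Γ M] : Prop :=
  Nontrivial M ∧ ∀ A B : Submodule Γ M, IsCompl A B → A = ⊥ ∨ B = ⊥

/-- An internal decomposition into indecomposable submodules. -/
def IsModDecomp {M : Type w} [AddCommGroup M] [Module Γ M] {n : ℕ}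
    (f : Fin n → Submodule Γ M) : Prop :=
  DirectSum.IsInternal f ∧ ∀ i, ModIndec Γ (f i)

/-- `|M| = n`: `M` has exactly `n` non-isomorphic indecomposable direct summands. -/
def NumIndecMod (M : Type w) [AddCommGroup M] [Module Γ M] (n : ℕ) : Prop :=
  ∃ (m : ℕ) (f : Fin m → Submodule Γ M) (g : Fin n → Submodule Γ M),
    IsModDecomp Γ f ∧ (∀ i, ModIndec Γ (g i)) ∧
    (∀ i j : Fin n, Nonempty (g i ≃ₗ[Γ] g j) → i = j) ∧
    (∀ i : Fin m, ∃ j : Fin n, Nonempty (f i ≃ₗ[Γ] g j)) ∧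
    (∀ j : Fin n, ∃ i : Fin m, Nonempty (f i ≃ₗ[Γ] g j))

/-- `M` is basic: it decomposes into pairwise non-isomorphic indecomposable submodules. -/
def ModBasic (M : Type w) [AddCommGroup M] [Module Γ M] : Prop :=
  ∃ (n : ℕ) (f : Fin n → Submodule Γ M), IsModDecomp Γ f ∧
    ∀ i j : Fin n, Nonempty (f i ≃ₗ[Γ] f j) → i = j

/-- `(M, P)` is a support `τ`-tilting pair: a `τ`-rigid pair with `|M| + |P| = |Γ|`. -/
def IsSuppTauTiltingPair (M P : Type w) [AddCommGroup M] [Module Γ M]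
    [AddCommGroup P] [Module Γ P] : Prop :=
  IsTauRigidPair Γ M P ∧
  ∃ nM nP nΓ : ℕ, NumIndecMod Γ M nM ∧ NumIndecMod Γ P nP ∧ NumIndecMod Γ Γ nΓ ∧
    nM + nP = nΓ

/-- `M` is a support `τ`-tilting module. -/
def IsSuppTauTilting (M : Type w) [AddCommGroup M] [Module Γ M] : Prop :=
  ∃ P : ModuleCat.{w} Γ, ModBasic Γ P ∧ IsSuppTauTiltingPair Γ M P

/-- `M` has projective dimension at most `1`. -/
def PdLeOne (M : Type w) [AddCommGroup M] [Module Γ M] : Prop :=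
  ∃ (P₁ P₀ : ModuleCat.{w} Γ) (f : P₁ →ₗ[Γ] P₀) (g : ↥P₀ →ₗ[Γ] M),
    Module.Projective Γ P₁ ∧ Module.Projective Γ P₀ ∧
    Function.Injective f ∧ Function.Surjective g ∧ Function.Exact f g

/-- `Ext¹_Γ(M, M) = 0`: every self-extension of `M` splits. -/
def SelfExtSplit (M : Type w) [AddCommGroup M] [Module Γ M] : Prop :=
  ∀ (E : ModuleCat.{w} Γ) (i : M →ₗ[Γ] E) (p : ↥E →ₗ[Γ] M),
    Function.Injective i → Function.Surjective p → Function.Exact i p →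
    ∃ r : ↥E →ₗ[Γ] M, r ∘ₗ i = LinearMap.id

/-- `M` is a (basic) tilting module: `M ∈ mod Γ` is basic with `pd M ≤ 1`,
`Ext¹(M, M) = 0` and `|M| = |Γ|`. -/
def IsTiltingMod (M : Type w) [AddCommGroup M] [Module Γ M] : Prop :=
  Module.Finite Γ M ∧ ModBasic Γ M ∧ PdLeOne Γ M ∧ SelfExtSplit Γ M ∧
  ∃ n : ℕ, NumIndecMod Γ M n ∧ NumIndecMod Γ Γ n

/-- The linear-isomorphism setoid on modules satisfying a predicate `p`. -/
def modSetoid (p : ModuleCat.{w} Γ → Prop) : Setoid {M : ModuleCat.{w} Γ // p M} where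
  r M N := Nonempty (↥M.1 ≃ₗ[Γ] ↥N.1)
  iseqv := ⟨fun _ => ⟨LinearEquiv.refl Γ _⟩, fun ⟨e⟩ => ⟨e.symm⟩, fun ⟨e⟩ ⟨f⟩ => ⟨e.trans f⟩⟩

/-- The componentwise linear-isomorphism setoid on pairs of modules satisfying `p`. -/
def pairSetoid (p : ModuleCat.{w} Γ × ModuleCat.{w} Γ → Prop) :
    Setoid {Mp : ModuleCat.{w} Γ × ModuleCat.{w} Γ // p Mp} where
  r A B := Nonempty (↥A.1.1 ≃ₗ[Γ] ↥B.1.1) ∧ Nonempty (↥A.1.2 ≃ₗ[Γ] ↥B.1.2)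
  iseqv := ⟨fun _ => ⟨⟨LinearEquiv.refl Γ _⟩, ⟨LinearEquiv.refl Γ _⟩⟩,
    fun ⟨⟨e⟩, ⟨f⟩⟩ => ⟨⟨e.symm⟩, ⟨f.symm⟩⟩,
    fun ⟨⟨e⟩, ⟨f⟩⟩ ⟨⟨e'⟩, ⟨f'⟩⟩ => ⟨⟨e.trans e'⟩, ⟨f.trans f'⟩⟩⟩

/-- `(M, P)` is a basic `τ`-rigid pair. -/
def BasicTauRigidPair (Mp : ModuleCat.{w} Γ × ModuleCat.{w} Γ) : Prop :=
  IsTauRigidPair Γ ↥Mp.1 ↥Mp.2 ∧ ModBasic Γ ↥Mp.1 ∧ ModBasic Γ ↥Mp.2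

end Modules

/-!
Since `R` is presilting, `Hom(A[j], B[i]) = 0` for `A, B ∈ add R` and `j < i`. Applying
`Hom(A[j], -)` to the shifted triangle `R₁[i] → R₀[i] → X[i] → R₁[i+1]` extends this to
`Hom(A[j], X[i]) = 0`. Hence every `φ : X → X[i]` with `i > 0` vanishes on `R₀ → X`, so it factors
through `X → R₁[1]`: for `i = 1` this makes `φ` factor through `add R[1]`, and for `i ≥ 2` the
second factor `R₁[1] → X[i]` is zero.
-/

section Triangulated

variable {𝒯 : Type*} [Category 𝒯] [Preadditive 𝒯] [HasZeroObject 𝒯] [HasShift 𝒯 ℤ]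
  [∀ n : ℤ, (shiftFunctor 𝒯 n).Additive] [Pretriangulated 𝒯]

lemma Triangle.hom_obj₃_eq_zero {T : Triangle 𝒯} (hT : T ∈ distTriang 𝒯) {W : 𝒯}
    (h₂ : ∀ ψ : W ⟶ T.obj₂, ψ = 0) (h₁ : ∀ ψ : W ⟶ T.obj₁⟦(1 : ℤ)⟧, ψ = 0)
    (φ : W ⟶ T.obj₃) : φ = 0 := by
  obtain ⟨ψ, rfl⟩ := Triangle.coyoneda_exact₃ T hT φ (h₁ _)
  rw [h₂ ψ, zero_comp]

end Triangulated

section AddVanishing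

variable {𝒯 : Type*} [Category 𝒯] [Preadditive 𝒯] [HasFiniteBiproducts 𝒯]
  {𝒟 : Type*} [Category 𝒟] [Preadditive 𝒟]

lemma InAdd.map_hom_eq_zero (F : 𝒯 ⥤ 𝒟) [F.Additive] {R A : 𝒯} (hA : InAdd R A) {Y : 𝒟}
    (h : ∀ ψ : F.obj R ⟶ Y, ψ = 0) (φ : F.obj A ⟶ Y) : φ = 0 := by
  obtain ⟨n, s, p, hsp⟩ := hA
  let B := fun _ : Fin n => R
  calc φ = F.map (s ≫ 𝟙 (⨁ B) ≫ p) ≫ φ := by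
        rw [Category.id_comp, hsp, F.map_id, Category.id_comp]
    _ = ∑ t, F.map (s ≫ biproduct.π B t) ≫ F.map (biproduct.ι B t ≫ p) ≫ φ := by
      simp only [← biproduct.total, Preadditive.sum_comp, Preadditive.comp_sum, F.map_sum,
        Category.assoc, F.map_comp]
    _ = 0 := by simp only [h, comp_zero, Finset.sum_const_zero]

lemma InAdd.hom_map_eq_zero (G : 𝒯 ⥤ 𝒟) [G.Additive] {R A : 𝒯} (hA : InAdd R A) {Y : 𝒟}
    (h : ∀ ψ : Y ⟶ G.obj R, ψ = 0) (φ : Y ⟶ G.obj A) : φ = 0 := by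
  obtain ⟨n, s, p, hsp⟩ := hA
  let B := fun _ : Fin n => R
  calc φ = φ ≫ G.map (s ≫ 𝟙 (⨁ B) ≫ p) := by
        rw [Category.id_comp, hsp, G.map_id, Category.comp_id]
    _ = ∑ t, (φ ≫ G.map (s ≫ biproduct.π B t)) ≫ G.map (biproduct.ι B t ≫ p) := by
      simp only [← biproduct.total, Preadditive.sum_comp, Preadditive.comp_sum, G.map_sum,
        Category.assoc, G.map_comp]
    _ = 0 := by simp only [h, zero_comp, Finset.sum_const_zero]

end AddVanishing

section Presilting

variable {𝒯 : Type*} [Category 𝒯] [Preadditive 𝒯] [HasShift 𝒯 ℤ]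

lemma IsPresilting.shift_hom_eq_zero {R : 𝒯} (hR : IsPresilting R) {j i : ℤ} (hij : j < i)
    (c : R⟦j⟧ ⟶ R⟦i⟧) : c = 0 := by
  let e := (shiftFunctorAdd' 𝒯 (i - j) j i (by omega)).app R
  have hc : (shiftFunctor 𝒯 j).preimage (c ≫ e.hom) = 0 := hR (i - j) (by omega) _
  rw [← cancel_mono e.hom, zero_comp, ← (shiftFunctor 𝒯 j).map_preimage (c ≫ e.hom), hc,
    Functor.map_zero]

variable [∀ n : ℤ, (shiftFunctor 𝒯 n).Additive] [HasFiniteBiproducts 𝒯]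

lemma InAdd.shift {R A : 𝒯} (hA : InAdd R A) (n : ℤ) : InAdd (R⟦n⟧) (A⟦n⟧) := by
  obtain ⟨m, s, p, hsp⟩ := hA
  let e := (shiftFunctor 𝒯 n).mapBiproduct (fun _ : Fin m => R)
  exact ⟨m, (shiftFunctor 𝒯 n).map s ≫ e.hom, e.inv ≫ (shiftFunctor 𝒯 n).map p, by
    simp [← Functor.map_comp, hsp]⟩

lemma IsPresilting.add_shift_hom_eq_zero {R A B : 𝒯} (hR : IsPresilting R) (hA : InAdd R A)
    (hB : InAdd R B) {j i : ℤ} (hij : j < i) (φ : A⟦j⟧ ⟶ B⟦i⟧) : φ = 0 :=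
  hA.map_hom_eq_zero (shiftFunctor 𝒯 j)
    (hB.hom_map_eq_zero (shiftFunctor 𝒯 i) (hR.shift_hom_eq_zero hij)) φ

variable [HasZeroObject 𝒯] [Pretriangulated 𝒯]

lemma IsPresilting.shift_hom_pr_shift_eq_zero {R A X : 𝒯} (hR : IsPresilting R)
    (hA : InAdd R A) (hX : InPr R X) {j i : ℤ} (hij : j < i) (φ : A⟦j⟧ ⟶ X⟦i⟧) : φ = 0 := by
  obtain ⟨R₁, R₀, hR₁, hR₀, f, g, h, hT⟩ := hX
  refine Triangle.hom_obj₃_eq_zero (Triangle.shift_distinguished _ hT i)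
    (hR.add_shift_hom_eq_zero hA hR₀ hij) (fun ψ => ?_) φ
  refine (cancel_mono ((shiftFunctorAdd' 𝒯 i 1 (i + 1) rfl).app R₁).inv).1 ?_
  exact (hR.add_shift_hom_eq_zero hA hR₁ (by omega) _).trans zero_comp.symm

lemma IsPresilting.hom_pr_shift_eq_zero {R A X : 𝒯} (hR : IsPresilting R) (hA : InAdd R A)
    (hX : InPr R X) {i : ℤ} (hi : 0 < i) (φ : A ⟶ X⟦i⟧) : φ = 0 := by
  rw [← cancel_epi ((shiftFunctorZero 𝒯 ℤ).hom.app A), comp_zero]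
  exact hR.shift_hom_pr_shift_eq_zero hA hX hi _

lemma IsPresilting.pr_hom_shift_factors_through_add_shift {R X : 𝒯} (hR : IsPresilting R)
    (hX : InPr R X) {i : ℤ} (hi : 0 < i) (φ : X ⟶ X⟦i⟧) :
    ∃ (R₁ : 𝒯) (_ : InAdd R R₁) (h : X ⟶ R₁⟦(1 : ℤ)⟧) (ψ : R₁⟦(1 : ℤ)⟧ ⟶ X⟦i⟧), h ≫ ψ = φ := by
  have ⟨R₁, R₀, hR₁, hR₀, f, g, h, hT⟩ := hX
  obtain ⟨ψ, hψ⟩ := Triangle.yoneda_exact₃ _ hT φ (hR.hom_pr_shift_eq_zero hR₀ hX hi _)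
  exact ⟨R₁, hR₁, h, ψ, hψ.symm⟩

lemma IsPresilting.pr_hom_shift_eq_zero {R X : 𝒯} (hR : IsPresilting R) (hX : InPr R X)
    {i : ℤ} (hi : 1 < i) (φ : X ⟶ X⟦i⟧) : φ = 0 := by
  obtain ⟨R₁, hR₁, h, ψ, rfl⟩ := hR.pr_hom_shift_factors_through_add_shift hX (by omega) φ
  rw [hR.shift_hom_pr_shift_eq_zero hR₁ hX hi ψ, comp_zero]

end Presilting

theorem statement12_general (R : C) (hR : IsPresilting R)
    (X : C) (hX : InPr R X) :
    (IsRelRigid R X ↔ IsRigidObj X) ∧ (IsRigidObj X ↔ IsPresilting X) := by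
  refine ⟨⟨fun hrel φ => ?_, fun hrig φ _ => hrig φ⟩,
    ⟨fun hrig i hi φ => ?_, fun hps => hps 1 one_pos⟩⟩
  · obtain ⟨R₁, hR₁, h, ψ, rfl⟩ := hR.pr_hom_shift_factors_through_add_shift hX one_pos φ
    exact hrel _ ⟨R₁⟦(1 : ℤ)⟧, hR₁.shift 1, h, ψ, rfl⟩
  · obtain rfl | hi := (by omega : i = 1 ∨ 1 < i)
    exacts [hrig φ, hR.pr_hom_shift_eq_zero hX hi φ]

/-- **Theorem 3.4 (1).**  Let `R` be a basic presilting object and `X ∈ pr(R)`.  Then the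
following are equivalent: `X` is `R[1]`-rigid; `X` is rigid; `X` is presilting. -/
theorem statement12 (R : C) (hRbasic : IsBasic R) (hR : IsPresilting R)
    (X : C) (hX : InPr R X) :
    (IsRelRigid R X ↔ IsRigidObj X) ∧ (IsRigidObj X ↔ IsPresilting X) :=
  statement12_general R hR X hX

end RelRigid
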